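/- A finite co-Heyting algebra L satisfies both the identity (⊤ \ x) ⊓ (⊤ \ (⊤ \ x)) = ⊥ and the identity (((⊤ \ x) ⊓ x) \ y) ⊓ y = ⊥ (for all x, y) if and only if L embeds as a co-Heyting algebra into a finite direct power of the three-element chain L₃ = {⊥ < c < ⊤}. -/

import Mathlib

/-!
In a finite co-Heyting algebra, a join-prime `m` lies below `a \ b` iff some join-prime `k ≥ m`
has `k ≤ a` and `k ≰ b`. With this, the second identity forbids chains `j < k < k'` of
join-primes, and the first forbids a join-prime with two distinct strict upper bounds among the
join-primes. So the join-primes above any join-prime `j` are `j` and at most one `k > j`, and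
counting which of `j`, `k` lie below `a` is a co-Heyting homomorphism `L → L₃`. These
homomorphisms separate the points of `L`, which gives the embedding into a power of `L₃`.
Conversely, both identities hold in `L₃` by computation, hence in its powers and in their
subalgebras.
-/

/-- `Ll b a` means `b ≪ a`: `a \ b = a` and `b ≤ a`. -/
def Ll {L : Type*} [CoheytingAlgebra L] (b a : L) : Prop := a \ b = a ∧ b ≤ a

/-- An embedding of co-Heyting algebras: injective and preserving `⊥`, `⊤`, `⊔`, `⊓`, `\`. -/
def IsCoheytingEmb {K L : Type*} [CoheytingAlgebra K] [CoheytingAlgebra L] (f : K → L) : Prop :=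
  Function.Injective f ∧ f ⊥ = ⊥ ∧ f ⊤ = ⊤ ∧
    (∀ a b, f (a ⊔ b) = f a ⊔ f b) ∧ (∀ a b, f (a ⊓ b) = f a ⊓ f b) ∧
    (∀ a b, f (a \ b) = f a \ f b)

def SatisfiesV5 (L : Type*) [CoheytingAlgebra L] : Prop :=
  (∀ x : L, (⊤ \ x) ⊓ (⊤ \ (⊤ \ x)) = ⊥) ∧ ∀ x y : L, (((⊤ \ x) ⊓ x) \ y) ⊓ y = ⊥

section Chain3

variable {p q p' q' : Prop}

open Classical in
noncomputable def chain3Of (p q : Prop) : Fin 3 := if q then 2 else if p then 1 else 0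

theorem chain3Of_eq_zero_iff (h : q → p) : chain3Of p q = 0 ↔ ¬ p := by
  by_cases hp : p <;> by_cases hq : q <;> simp_all [chain3Of]

theorem chain3Of_sup (h : q → p) (h' : q' → p') :
    chain3Of (p ∨ p') (q ∨ q') = chain3Of p q ⊔ chain3Of p' q' := by
  by_cases hp : p <;> by_cases hq : q <;> by_cases hp' : p' <;> by_cases hq' : q' <;>
    simp_all [chain3Of]

theorem chain3Of_inf (h : q → p) (h' : q' → p') :
    chain3Of (p ∧ p') (q ∧ q') = chain3Of p q ⊓ chain3Of p' q' := by
  by_cases hp : p <;> by_cases hq : q <;> by_cases hp' : p' <;> by_cases hq' : q' <;>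
    simp_all [chain3Of]

theorem chain3Of_sdiff (h : q → p) (h' : q' → p') :
    chain3Of (p ∧ ¬ p' ∨ q ∧ ¬ q') (q ∧ ¬ q') = chain3Of p q \ chain3Of p' q' := by
  by_cases hp : p <;> by_cases hq : q <;> by_cases hp' : p' <;> by_cases hq' : q' <;>
    simp_all [chain3Of] <;> decide

end Chain3

theorem exists_supPrime_le_not_le {α : Type*} [DistribLattice α] [OrderBot α] [WellFoundedLT α]
    {a b : α} (hab : ¬ a ≤ b) : ∃ j, SupPrime j ∧ j ≤ a ∧ ¬ j ≤ b := by
  obtain ⟨s, rfl, hs⟩ := exists_supIrred_decomposition a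
  obtain ⟨j, hjs, hjb⟩ : ∃ j ∈ s, ¬ j ≤ b := by simpa [Finset.sup_le_iff] using hab
  exact ⟨j, (hs hjs).supPrime, Finset.le_sup (f := id) hjs, hjb⟩

section SupPrime

variable {L : Type*} [CoheytingAlgebra L]

theorem SupPrime.le_or_le_top_sdiff {k : L} (hk : SupPrime k) (x : L) : k ≤ x ∨ k ≤ ⊤ \ x :=
  hk.le_sup.1 (le_top.trans le_sup_sdiff)

variable [WellFoundedLT L]

theorem SupPrime.le_sdiff_iff {m a b : L} (hm : SupPrime m) :
    m ≤ a \ b ↔ ∃ k, SupPrime k ∧ m ≤ k ∧ k ≤ a ∧ ¬ k ≤ b := by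
  constructor
  · intro hmab
    obtain ⟨s, rfl, hs⟩ := exists_supIrred_decomposition a
    rw [Finset.apply_sup_eq_sup_comp (· \ b) (fun _ _ => sup_sdiff) bot_sdiff] at hmab
    obtain ⟨k, hks, hmk⟩ := hm.le_finset_sup.1 hmab
    refine ⟨k, (hs hks).supPrime, hmk.trans sdiff_le, Finset.le_sup (f := id) hks, fun hkb => ?_⟩
    exact hm.ne_bot (le_bot_iff.1 (hmk.trans (sdiff_eq_bot_iff.2 hkb).le))
  · rintro ⟨k, hk, hmk, hka, hkb⟩
    exact hmk.trans ((hk.le_sup.1 (hka.trans le_sup_sdiff)).resolve_left hkb)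

theorem SupPrime.le_sdiff_iff_exists_mem {m : L} (hm : SupPrime m) {S : Set L}
    (hS : ∀ k, SupPrime k ∧ m ≤ k ↔ k ∈ S) {a b : L} :
    m ≤ a \ b ↔ ∃ k ∈ S, k ≤ a ∧ ¬ k ≤ b := by
  simp only [hm.le_sdiff_iff, ← hS, and_assoc]

theorem SupPrime.le_top_sdiff_self_iff {k : L} (hk : SupPrime k) :
    k ≤ ⊤ \ k ↔ ∃ k', SupPrime k' ∧ k < k' := by
  constructor
  · intro h
    rw [← sdiff_idem, hk.le_sdiff_iff] at h
    obtain ⟨k', hk', hkk', -, hk'k⟩ := h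
    exact ⟨k', hk', lt_of_le_not_ge hkk' hk'k⟩
  · rintro ⟨k', hk', hkk'⟩
    exact hkk'.le.trans ((hk'.le_or_le_top_sdiff k).resolve_left hkk'.not_ge)

/-- `a` goes to the down-set `{j, k} ∩ Iic a` of the chain `{j, k}`; since `j` and `k` are the only
join-primes above `j`, this respects `\`. -/
noncomputable def coheytingHomFin3 {j k : L} (hj : SupPrime j) (hk : SupPrime k) (hjk : j ≤ k)
    (hup : ∀ k', SupPrime k' → j ≤ k' → k' = j ∨ k' = k) : CoheytingHom L (Fin 3) where
  toFun a := chain3Of (j ≤ a) (k ≤ a)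
  map_sup' a b := by
    simp only [hj.le_sup, hk.le_sup]
    exact chain3Of_sup hjk.trans hjk.trans
  map_inf' a b := by
    simp only [le_inf_iff]
    exact chain3Of_inf hjk.trans hjk.trans
  map_top' := by simp only [le_top, chain3Of, if_true]; rfl
  map_sdiff' a b := by
    have hup_j (k' : L) : SupPrime k' ∧ j ≤ k' ↔ k' ∈ ({j, k} : Set L) := by
      refine ⟨fun ⟨hk', hjk'⟩ => hup k' hk' hjk', ?_⟩
      rintro (rfl | rfl)
      exacts [⟨hj, le_rfl⟩, ⟨hk, hjk⟩]
    have hup_k (k' : L) : SupPrime k' ∧ k ≤ k' ↔ k' ∈ ({k} : Set L) := by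
      refine ⟨fun ⟨hk', hkk'⟩ => ?_, by rintro rfl; exact ⟨hk, le_rfl⟩⟩
      rcases hup k' hk' (hjk.trans hkk') with rfl | rfl
      exacts [(hjk.antisymm' hkk').symm, rfl]
    rw [hj.le_sdiff_iff_exists_mem hup_j, hk.le_sdiff_iff_exists_mem hup_k]
    simp only [Set.mem_insert_iff, Set.mem_singleton_iff, exists_eq_or_imp, exists_eq_left]
    exact chain3Of_sdiff hjk.trans hjk.trans

theorem coheytingHomFin3_apply {j k : L} (hj : SupPrime j) (hk : SupPrime k) (hjk : j ≤ k)
    (hup : ∀ k', SupPrime k' → j ≤ k' → k' = j ∨ k' = k) (a : L) :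
    coheytingHomFin3 hj hk hjk hup a = chain3Of (j ≤ a) (k ≤ a) := rfl

theorem SupPrime.eq_of_lt_of_le (hL : ∀ x y : L, (((⊤ \ x) ⊓ x) \ y) ⊓ y = ⊥) {j k k' : L}
    (hj : SupPrime j) (hk : SupPrime k) (hk' : SupPrime k') (hjk : j < k) (hkk' : k ≤ k') :
    k' = k := by
  by_contra hne
  have hk_le : k ≤ ⊤ \ k := hk.le_top_sdiff_self_iff.2 ⟨k', hk', lt_of_le_of_ne hkk' (Ne.symm hne)⟩
  have hj_le : j ≤ ((⊤ \ k) ⊓ k) \ j :=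
    hj.le_sdiff_iff.2 ⟨k, hk, hjk.le, le_inf hk_le le_rfl, hjk.not_ge⟩
  exact hj.ne_bot (le_bot_iff.1 (hL k j ▸ le_inf hj_le le_rfl))

theorem SupPrime.eq_of_lt_of_lt (hL : SatisfiesV5 L) {j k₁ k₂ : L} (hj : SupPrime j)
    (hk₁ : SupPrime k₁) (hk₂ : SupPrime k₂) (h₁ : j < k₁) (h₂ : j < k₂) : k₁ = k₂ := by
  by_contra hne
  have hk₂_le : k₂ ≤ ⊤ \ k₁ := (hk₂.le_or_le_top_sdiff k₁).resolve_left
    fun h => hne (hj.eq_of_lt_of_le hL.2 hk₂ hk₁ h₂ h)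
  have hk₁_max : ¬ k₁ ≤ ⊤ \ k₁ := by
    rw [hk₁.le_top_sdiff_self_iff]
    rintro ⟨k, hk, hlt⟩
    exact hlt.ne' (hj.eq_of_lt_of_le hL.2 hk₁ hk h₁ hlt.le)
  have hk₁_le : k₁ ≤ ⊤ \ (⊤ \ k₁) := (hk₁.le_or_le_top_sdiff _).resolve_left hk₁_max
  exact hj.ne_bot (le_bot_iff.1 (hL.1 k₁ ▸ le_inf (h₂.le.trans hk₂_le) (h₁.le.trans hk₁_le)))

theorem SatisfiesV5.exists_supPrime_forall_eq_or_eq (hL : SatisfiesV5 L) {j : L}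
    (hj : SupPrime j) :
    ∃ k, SupPrime k ∧ j ≤ k ∧ ∀ k', SupPrime k' → j ≤ k' → k' = j ∨ k' = k := by
  by_cases h : ∃ k, SupPrime k ∧ j < k
  · obtain ⟨k, hk, hjk⟩ := h
    refine ⟨k, hk, hjk.le, fun k' hk' hjk' => ?_⟩
    rcases hjk'.eq_or_lt with rfl | hlt
    · exact .inl rfl
    · exact .inr (hj.eq_of_lt_of_lt hL hk' hk hlt hjk)
  · simp only [not_exists, not_and] at h
    exact ⟨j, hj, le_rfl, fun k' hk' hjk' => .inl (hjk'.eq_of_not_lt (h k' hk')).symm⟩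

theorem SatisfiesV5.exists_coheytingHom_fin3_ne (hL : SatisfiesV5 L) {a b : L} (hab : a ≠ b) :
    ∃ h : CoheytingHom L (Fin 3), h a ≠ h b := by
  wlog hab' : ¬ a ≤ b generalizing a b
  · obtain ⟨h, hne⟩ := this hab.symm fun hba => hab ((not_not.1 hab').antisymm hba)
    exact ⟨h, hne.symm⟩
  obtain ⟨j, hj, hja, hjb⟩ := exists_supPrime_le_not_le hab'
  obtain ⟨k, hk, hjk, hup⟩ := hL.exists_supPrime_forall_eq_or_eq hj
  refine ⟨coheytingHomFin3 hj hk hjk hup, ?_⟩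
  rw [coheytingHomFin3_apply, coheytingHomFin3_apply]
  intro hab_eq
  exact (chain3Of_eq_zero_iff hjk.trans).1
    (hab_eq.trans ((chain3Of_eq_zero_iff hjk.trans).2 hjb)) hja

end SupPrime

theorem exists_isCoheytingEmb_pi_of_separating {K M : Type*} [CoheytingAlgebra K]
    [CoheytingAlgebra M] [Finite K] [Finite M]
    (hsep : ∀ a b : K, a ≠ b → ∃ h : CoheytingHom K M, h a ≠ h b) :
    ∃ (n : ℕ) (f : K → Fin n → M), IsCoheytingEmb f := by
  have : Finite (CoheytingHom K M) := FunLike.finite _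
  obtain ⟨n, ⟨e⟩⟩ := Finite.exists_equiv_fin (CoheytingHom K M)
  refine ⟨n, fun a i => e.symm i a, fun a b hab => ?_, ?_, ?_, ?_, ?_, ?_⟩
  · by_contra hne
    obtain ⟨h, hh⟩ := hsep a b hne
    exact hh (by simpa using congrFun hab (e h))
  · funext i; exact map_bot _
  · funext i; exact map_top _
  · intro a b; funext i; exact map_sup _ a b
  · intro a b; funext i; exact map_inf _ a b
  · intro a b; funext i; exact map_sdiff _ a b

theorem satisfiesV5_fin3 : SatisfiesV5 (Fin 3) := by
  unfold SatisfiesV5; decide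

theorem SatisfiesV5.pi {ι : Type*} {M : ι → Type*} [∀ i, CoheytingAlgebra (M i)]
    (hM : ∀ i, SatisfiesV5 (M i)) : SatisfiesV5 (∀ i, M i) :=
  ⟨fun x => funext fun i => (hM i).1 (x i), fun x y => funext fun i => (hM i).2 (x i) (y i)⟩

theorem SatisfiesV5.of_isCoheytingEmb {K M : Type*} [CoheytingAlgebra K] [CoheytingAlgebra M]
    {f : K → M} (hM : SatisfiesV5 M) (hf : IsCoheytingEmb f) : SatisfiesV5 K := by
  obtain ⟨hinj, hbot, htop, -, hinf, hsdiff⟩ := hf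
  exact ⟨fun x => hinj (by simp only [hinf, hsdiff, htop, hbot, hM.1]),
    fun x y => hinj (by simp only [hinf, hsdiff, htop, hbot, hM.2])⟩

theorem V5_iff_embeds_in_power_of_three_chain (L : Type*) [CoheytingAlgebra L] [Finite L] :
    ((∀ x : L, (⊤ \ x) ⊓ (⊤ \ (⊤ \ x)) = ⊥) ∧
     (∀ x y : L, (((⊤ \ x) ⊓ x) \ y) ⊓ y = ⊥)) ↔
    ∃ (n : ℕ) (f : L → (Fin n → Fin 3)), IsCoheytingEmb f := by
  change SatisfiesV5 L ↔ _
  constructor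
  · exact fun hL => exists_isCoheytingEmb_pi_of_separating fun _ _ =>
      hL.exists_coheytingHom_fin3_ne
  · rintro ⟨n, f, hf⟩
    exact (SatisfiesV5.pi fun _ => satisfiesV5_fin3).of_isCoheytingEmb hf
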